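/- arXiv:2305.09547 — 5 statements merged into one kernel-verified Lean document; each statement's English description precedes it below -/
import Mathlib

section
/- Let α ≥ 1 and let z₀,…,z_{n+1} be nonnegative reals with z₀ = z_{n+1} = 0, each zᵢ > 0 for 1 ≤ i ≤ n, and Σᵢzᵢ = 1. Call index i (1 ≤ i ≤ n) significant if (√α·z_{i-1} < zᵢ and √α·zᵢ < z_{i+1}) or (z_{i-1} > √α·zᵢ and zᵢ > √α·z_{i+1}). Then Σ_{i=1}^{n} zᵢ·|zᵢ/(z_{i-1}+zᵢ) − zᵢ/(zᵢ+z_{i+1})|^α ≤ (Σ over significant i of the same summand) + (1 − 1/(1+√α))^α. -/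
open Real Finset

/-!
Away from the significant indices the three consecutive weights `a, b, c` are not `√α`-steeply
monotone, and then `|b/(a+b) - b/(b+c)| ≤ √α/(1+√α) = 1 - 1/(1+√α)`. Each such summand is thus at
most `zᵢ (1 - 1/(1+√α))^α`, and the weights `zᵢ` sum to at most `1`.
-/

lemma div_add_sub_div_add_le {s a b c : ℝ} (hs : 0 ≤ s) (ha : 0 ≤ a) (hb : 0 < b) (hc : 0 ≤ c)
    (h : ¬(s * a < b ∧ s * b < c)) :
    b / (a + b) - b / (b + c) ≤ s / (1 + s) := by
  have key : b * (c - a) * (1 + s) ≤ s * ((a + b) * (b + c)) := by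
    rcases le_or_gt b (s * a) with hba | hba
    · nlinarith [mul_nonneg (sub_nonneg.2 hba) hc, mul_nonneg (mul_nonneg hs ha) hb.le,
        mul_nonneg (mul_nonneg hs hb.le) hb.le, mul_nonneg ha hb.le]
    · have hcb : c ≤ s * b := not_lt.1 fun hcb => h ⟨hba, hcb⟩
      nlinarith [mul_nonneg (sub_nonneg.2 hcb) hb.le, mul_nonneg (mul_nonneg hs ha) hb.le,
        mul_nonneg (mul_nonneg hs ha) hc, mul_nonneg ha hb.le]
  have hab : 0 < a + b := by linarith
  have hbc : 0 < b + c := by linarith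
  rw [div_sub_div _ _ hab.ne' hbc.ne', div_le_div_iff₀ (mul_pos hab hbc) (by linarith)]
  linarith

lemma abs_div_add_sub_div_add_le {s a b c : ℝ} (hs : 0 ≤ s) (ha : 0 ≤ a) (hb : 0 < b)
    (hc : 0 ≤ c) (h : ¬((s * a < b ∧ s * b < c) ∨ (a > s * b ∧ b > s * c))) :
    |b / (a + b) - b / (b + c)| ≤ s / (1 + s) := by
  rw [not_or] at h
  rw [abs_sub_le_iff]
  refine ⟨div_add_sub_div_add_le hs ha hb hc h.1, ?_⟩
  have := div_add_sub_div_add_le hs hc hb ha fun ⟨h₁, h₂⟩ => h.2 ⟨h₂, h₁⟩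
  rwa [add_comm c b, add_comm b a] at this

open scoped Classical in
theorem stmt7_general (α : ℝ) (hα : 1 ≤ α) (n : ℕ) (z : ℕ → ℝ)
    (h0 : z 0 = 0) (hend : z (n + 1) = 0)
    (hpos : ∀ i, 1 ≤ i → i ≤ n → 0 < z i)
    (hsum : ∑ i ∈ Finset.Icc 1 n, z i = 1) :
    ∑ i ∈ Finset.Icc 1 n,
        z i * |z i / (z (i - 1) + z i) - z i / (z i + z (i + 1))| ^ α
      ≤ (∑ i ∈ (Finset.Icc 1 n).filter
            (fun i => (Real.sqrt α * z (i - 1) < z i ∧ Real.sqrt α * z i < z (i + 1)) ∨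
                      (z (i - 1) > Real.sqrt α * z i ∧ z i > Real.sqrt α * z (i + 1))),
          z i * |z i / (z (i - 1) + z i) - z i / (z i + z (i + 1))| ^ α)
        + (1 - 1 / (1 + Real.sqrt α)) ^ α := by
  set s := √α
  have hs : 0 ≤ s := sqrt_nonneg α
  have hbound : 1 - 1 / (1 + s) = s / (1 + s) := by field_simp; ring
  have hz : ∀ j ≤ n + 1, 0 ≤ z j := by
    intro j hj
    rcases Nat.eq_zero_or_pos j with rfl | hj0
    · exact h0.ge
    rcases hj.eq_or_lt with rfl | hjn
    · exact hend.ge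
    exact (hpos j hj0 (by omega)).le
  set significant : ℕ → Prop := fun i => (s * z (i - 1) < z i ∧ s * z i < z (i + 1)) ∨
    (z (i - 1) > s * z i ∧ z i > s * z (i + 1))
  rw [← sum_filter_add_sum_filter_not (Icc 1 n) significant, add_le_add_iff_left, hbound]
  calc _ ≤ ∑ i ∈ (Icc 1 n).filter (¬ significant ·), z i * (s / (1 + s)) ^ α := by
        refine sum_le_sum fun i hi => ?_
        obtain ⟨hi, hns⟩ := mem_filter.1 hi
        obtain ⟨hi1, hin⟩ := mem_Icc.1 hi
        have hzi := hpos i hi1 hin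
        gcongr
        exact abs_div_add_sub_div_add_le hs (hz _ (by omega)) hzi (hz _ (by omega)) hns
    _ ≤ (∑ i ∈ Icc 1 n, z i) * (s / (1 + s)) ^ α := by
        rw [← sum_mul]
        gcongr
        · intro i hi _
          exact hz i (by linarith [(mem_Icc.1 hi).2])
        · exact filter_subset _ _
    _ = _ := by rw [hsum, one_mul]

open scoped Classical in
theorem stmt7 (α : ℝ) (hα : 1 ≤ α) (n : ℕ) (hn : 1 ≤ n) (z : ℕ → ℝ)
    (h0 : z 0 = 0) (hend : z (n + 1) = 0)
    (hpos : ∀ i, 1 ≤ i → i ≤ n → 0 < z i)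
    (hsum : ∑ i ∈ Finset.Icc 1 n, z i = 1) :
    ∑ i ∈ Finset.Icc 1 n,
        z i * |z i / (z (i - 1) + z i) - z i / (z i + z (i + 1))| ^ α
      ≤ (∑ i ∈ (Finset.Icc 1 n).filter
            (fun i => (Real.sqrt α * z (i - 1) < z i ∧ Real.sqrt α * z i < z (i + 1)) ∨
                      (z (i - 1) > Real.sqrt α * z i ∧ z i > Real.sqrt α * z (i + 1))),
          z i * |z i / (z (i - 1) + z i) - z i / (z i + z (i + 1))| ^ α)
        + (1 - 1 / (1 + Real.sqrt α)) ^ α :=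
  stmt7_general α hα n z h0 hend hpos hsum
end

section
/- Let m be a probability measure on [0,1]² and suppose m = μ + ν where μ, ν are nonnegative Borel measures on [0,1]² satisfying: for all Borel A, B ⊆ [0,1], ∫_A (1−x) dμˣ = ∫_A x dνˣ and ∫_B (1−y) dμʸ = ∫_B y dνʸ (where μˣ, νˣ denote first-coordinate marginals and μʸ, νʸ second-coordinate marginals). Then m is coherent, i.e., there exists a probability space carrying a random vector (X,Y) with law m and a random variable Z ∈ [0,1] such that X = E(Z|X) and Y = E(Z|Y) almost surely. -/
open MeasureTheory Set

/-- A probability measure on `ℝ × ℝ` (thought of as supported on `[0,1]²`) is *coherent*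
if it is the joint law of a random vector `(X, Y)` such that `X = 𝔼(Z|X)` and
`Y = 𝔼(Z|Y)` almost surely, for some random variable `Z` with values in `[0,1]`. -/
def IsCoherent (m : Measure (ℝ × ℝ)) : Prop :=
  ∃ (Ω : Type) (_mΩ : MeasurableSpace Ω) (P : Measure Ω) (_ : IsProbabilityMeasure P)
    (X Y Z : Ω → ℝ),
      Measurable X ∧ Measurable Y ∧ Measurable Z ∧
      (∀ ω, Z ω ∈ Set.Icc (0 : ℝ) 1) ∧
      Measure.map (fun ω => (X ω, Y ω)) P = m ∧
      X =ᵐ[P] P[Z | MeasurableSpace.comap X (borel ℝ)] ∧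
      Y =ᵐ[P] P[Z | MeasurableSpace.comap Y (borel ℝ)]

/-- The pair `(μ, ν)` of nonnegative Borel measures belongs to the class `R`:
`∫_A (1-x) dμˣ = ∫_A x dνˣ` and `∫_B (1-y) dμʸ = ∫_B y dνʸ` for all Borel `A, B`. -/
def MemR (μ ν : Measure (ℝ × ℝ)) : Prop :=
  ∀ A : Set ℝ, MeasurableSet A →
    (∫ x in A, (1 - x) ∂(μ.map Prod.fst) = ∫ x in A, x ∂(ν.map Prod.fst)) ∧
    (∫ y in A, (1 - y) ∂(μ.map Prod.snd) = ∫ y in A, y ∂(ν.map Prod.snd))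

/-!
Take for the probability space the disjoint union of two copies of the plane, carrying `μ` on
the first and `ν` on the second, let `(X, Y)` be the point itself and `Z` the indicator of the
first copy. Then `∫_{X ∈ A} Z = μˣ(A)` and `∫_{X ∈ A} X = ∫_A x dμˣ + ∫_A x dνˣ`, and the
defining identity of the class `R` says precisely that these agree, i.e. `X = 𝔼(Z|X)`;
symmetrically `Y = 𝔼(Z|Y)`.
-/

namespace MeasureTheory.Measure

variable {α β : Type*} [MeasurableSpace α] [MeasurableSpace β]

lemma measurableEmbedding_inl : MeasurableEmbedding (Sum.inl : α → α ⊕ β) :=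
  ⟨Sum.inl_injective, measurable_inl, fun _ => MeasurableSet.inl_image⟩

lemma measurableEmbedding_inr : MeasurableEmbedding (Sum.inr : β → α ⊕ β) :=
  ⟨Sum.inr_injective, measurable_inr, fun _ => MeasurableSet.inr_image⟩

noncomputable def disjointSum (μ : Measure α) (ν : Measure β) : Measure (α ⊕ β) :=
  μ.map Sum.inl + ν.map Sum.inr

variable (μ : Measure α) (ν : Measure β)

instance [IsFiniteMeasure μ] [IsFiniteMeasure ν] : IsFiniteMeasure (disjointSum μ ν) := by
  unfold disjointSum; infer_instance

lemma map_sumElim_disjointSum {γ : Type*} [MeasurableSpace γ] {f : α → γ} {g : β → γ}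
    (hf : Measurable f) (hg : Measurable g) :
    (disjointSum μ ν).map (Sum.elim f g) = μ.map f + ν.map g := by
  rw [disjointSum, Measure.map_add _ _ (hf.sumElim hg),
    Measure.map_map (hf.sumElim hg) measurable_inl, Measure.map_map (hf.sumElim hg) measurable_inr,
    Sum.elim_comp_inl, Sum.elim_comp_inr]

variable {E : Type*} [NormedAddCommGroup E]

lemma integrable_disjointSum_iff {g : α ⊕ β → E} :
    Integrable g (disjointSum μ ν) ↔ Integrable (g ∘ Sum.inl) μ ∧ Integrable (g ∘ Sum.inr) ν := by
  rw [disjointSum, integrable_add_measure, measurableEmbedding_inl.integrable_map_iff,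
    measurableEmbedding_inr.integrable_map_iff]

lemma setIntegral_disjointSum [NormedSpace ℝ E] {g : α ⊕ β → E}
    (hg : Integrable g (disjointSum μ ν)) (s : Set (α ⊕ β)) :
    ∫ x in s, g x ∂(disjointSum μ ν)
      = ∫ a in Sum.inl ⁻¹' s, g (.inl a) ∂μ + ∫ b in Sum.inr ⁻¹' s, g (.inr b) ∂ν := by
  rw [disjointSum, integrable_add_measure] at hg
  rw [disjointSum, Measure.restrict_add, integral_add_measure hg.1.restrict hg.2.restrict,
    measurableEmbedding_inl.restrict_map, measurableEmbedding_inr.restrict_map,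
    measurableEmbedding_inl.integral_map, measurableEmbedding_inr.integral_map]

end MeasureTheory.Measure

open Measure

lemma MeasureTheory.Integrable.of_ae_mem_Icc {Ω : Type*} [MeasurableSpace Ω] {ρ : Measure Ω}
    [IsFiniteMeasure ρ] {g : Ω → ℝ} {a b : ℝ} (hg : AEStronglyMeasurable g ρ)
    (h : ∀ᵐ ω ∂ρ, g ω ∈ Icc a b) :
    Integrable g ρ :=
  .of_bound hg (max |a| |b|) (h.mono fun _ hω => abs_le_max_abs_abs hω.1 hω.2)

lemma integrable_fst_and_snd_of_le {m ρ : Measure (ℝ × ℝ)} [IsFiniteMeasure m]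
    (hsupp : m (Icc (0:ℝ) 1 ×ˢ Icc (0:ℝ) 1)ᶜ = 0) (hρ : ρ ≤ m) :
    Integrable Prod.fst ρ ∧ Integrable Prod.snd ρ := by
  have := isFiniteMeasure_of_le m hρ
  have hsq : ∀ᵐ p ∂ρ, p ∈ Icc (0:ℝ) 1 ×ˢ Icc (0:ℝ) 1 := ae_mono hρ (ae_iff.2 hsupp)
  exact ⟨.of_ae_mem_Icc measurable_fst.aestronglyMeasurable (hsq.mono fun _ hp => hp.1),
    .of_ae_mem_Icc measurable_snd.aestronglyMeasurable (hsq.mono fun _ hp => hp.2)⟩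

theorem ae_eq_condExp_comap_of_forall_setIntegral_preimage_eq {Ω : Type*} [MeasurableSpace Ω]
    {P : Measure Ω} [IsFiniteMeasure P] {W Z : Ω → ℝ} (hW : Measurable W)
    (hWi : Integrable W P) (hZi : Integrable Z P)
    (h : ∀ A, MeasurableSet A → ∫ ω in W ⁻¹' A, W ω ∂P = ∫ ω in W ⁻¹' A, Z ω ∂P) :
    W =ᵐ[P] P[Z | MeasurableSpace.comap W (borel ℝ)] := by
  have hm := hW.comap_le
  have : SigmaFinite (P.trim hm) := (isFiniteMeasure_trim hm).toSigmaFinite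
  refine ae_eq_condExp_of_forall_setIntegral_eq hm hZi (fun _ _ _ => hWi.integrableOn) ?_
    (comap_measurable W).stronglyMeasurable.aestronglyMeasurable
  rintro _ ⟨A, hA, rfl⟩ -
  exact h A hA

theorem ae_eq_condExp_sumElim {α : Type*} [MeasurableSpace α] (μ ν : Measure α)
    [IsFiniteMeasure μ] [IsFiniteMeasure ν] {f : α → ℝ} (hf : Measurable f)
    (hfμ : Integrable f μ) (hfν : Integrable f ν)
    (h : ∀ A, MeasurableSet A → ∫ x in A, (1 - x) ∂(μ.map f) = ∫ x in A, x ∂(ν.map f)) :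
    Sum.elim f f =ᵐ[disjointSum μ ν]
      (disjointSum μ ν)[Sum.elim 1 0 | MeasurableSpace.comap (Sum.elim f f) (borel ℝ)] := by
  have hWi : Integrable (Sum.elim f f) (disjointSum μ ν) :=
    (integrable_disjointSum_iff μ ν).2 ⟨hfμ, hfν⟩
  have hZi : Integrable (Sum.elim (1 : α → ℝ) 0) (disjointSum μ ν) :=
    (integrable_disjointSum_iff μ ν).2 ⟨integrable_const 1, integrable_zero _ _ _⟩
  refine ae_eq_condExp_comap_of_forall_setIntegral_preimage_eq (hf.sumElim hf) hWi hZi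
    fun A hA => ?_
  have hA' := h A hA
  rw [setIntegral_map hA (by fun_prop) hf.aemeasurable,
    setIntegral_map hA (by fun_prop) hf.aemeasurable,
    integral_sub (integrable_const 1).integrableOn hfμ.integrableOn] at hA'
  rw [setIntegral_disjointSum _ _ hWi, setIntegral_disjointSum _ _ hZi]
  simp only [Sum.elim_inl, Sum.elim_inr, Pi.one_apply, Pi.zero_apply, integral_zero, add_zero]
  change ∫ a in f ⁻¹' A, f a ∂μ + ∫ b in f ⁻¹' A, f b ∂ν = ∫ a in f ⁻¹' A, 1 ∂μ
  linarith

theorem stmt9 (m μ ν : Measure (ℝ × ℝ)) [IsProbabilityMeasure m]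
    (hsupp : m (Icc (0:ℝ) 1 ×ˢ Icc (0:ℝ) 1)ᶜ = 0)
    (hdecomp : m = μ + ν) (hR : MemR μ ν) :
    IsCoherent m := by
  have hμm : μ ≤ m := hdecomp ▸ Measure.le_add_right le_rfl
  have hνm : ν ≤ m := hdecomp ▸ Measure.le_add_left le_rfl
  have := isFiniteMeasure_of_le m hμm
  have := isFiniteMeasure_of_le m hνm
  have hμ := integrable_fst_and_snd_of_le hsupp hμm
  have hν := integrable_fst_and_snd_of_le hsupp hνm
  have hpair : (fun ω => (Sum.elim Prod.fst Prod.fst ω, Sum.elim Prod.snd Prod.snd ω))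
      = Sum.elim (id : ℝ × ℝ → ℝ × ℝ) id := by
    funext ω; cases ω <;> rfl
  have hlaw : (disjointSum μ ν).map (Sum.elim id id) = m := by
    rw [map_sumElim_disjointSum μ ν measurable_id measurable_id, Measure.map_id, Measure.map_id,
      hdecomp]
  have : IsProbabilityMeasure ((disjointSum μ ν).map (Sum.elim id id)) := hlaw ▸ inferInstance
  refine ⟨_, inferInstance, disjointSum μ ν, isProbabilityMeasure_of_map (Sum.elim id id),
    Sum.elim Prod.fst Prod.fst, Sum.elim Prod.snd Prod.snd, Sum.elim 1 0,
    measurable_fst.sumElim measurable_fst, measurable_snd.sumElim measurable_snd,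
    measurable_const.sumElim measurable_const, ?_, hpair ▸ hlaw,
    ae_eq_condExp_sumElim μ ν measurable_fst hμ.1 hν.1 fun A hA => (hR A hA).1,
    ae_eq_condExp_sumElim μ ν measurable_snd hμ.2 hν.2 fun A hA => (hR A hA).2⟩
  rintro (_ | _) <;> simp
end

section
/- Let m be a coherent probability measure on [0,1]², i.e., m is the joint law of (X,Y) with X = E(Z|X), Y = E(Z|Y) a.s. for some random variable Z ∈ [0,1]. Define μ(C) = ∫_{(X,Y)∈C} Z dP and ν(C) = ∫_{(X,Y)∈C} (1−Z) dP for Borel C ⊆ [0,1]². Then m = μ + ν and for every Borel A ⊆ [0,1], ∫_A (1−x) dμˣ = ∫_A x dνˣ, where μˣ, νˣ are the first-coordinate marginals. -/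
/-! Splitting `P = Z • P + (1 - Z) • P` and pushing forward gives `m = μ + ν`. Pulled back to `Ω`,
both sides of the marginal identity are integrals over `S = X⁻¹' A`: the left one is
`∫_S Z (1 - X) = ∫_S Z - ∫_S Z X` and the right one is `∫_S (1 - Z) X = ∫_S X - ∫_S Z X`. They agree
because `∫_S X = ∫_S Z`, which is the defining property of `X = E(Z | X)` on the `σ(X)`-set `S`. -/

open MeasureTheory Set

section

variable {Ω : Type*} [MeasurableSpace Ω] {P : Measure Ω}

lemma withDensity_ofReal_add_withDensity_ofReal_one_sub {Z : Ω → ℝ} (hZ : Measurable Z)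
    (hZ01 : ∀ ω, Z ω ∈ Icc (0 : ℝ) 1) :
    P.withDensity (fun ω => ENNReal.ofReal (Z ω))
      + P.withDensity (fun ω => ENNReal.ofReal (1 - Z ω)) = P := by
  have hsum : ((fun ω => ENNReal.ofReal (Z ω)) + fun ω => ENNReal.ofReal (1 - Z ω)) = 1 := by
    funext ω
    rw [Pi.add_apply, ← ENNReal.ofReal_add (hZ01 ω).1 (sub_nonneg.2 (hZ01 ω).2)]
    simp
  rw [← withDensity_add_left hZ.ennreal_ofReal, hsum, withDensity_one]

lemma setIntegral_map_withDensity_ofReal {X W : Ω → ℝ} (hX : Measurable X) (hW : Measurable W)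
    (hW0 : ∀ ω, 0 ≤ W ω) {f : ℝ → ℝ} (hf : Measurable f) {A : Set ℝ} (hA : MeasurableSet A) :
    ∫ x in A, f x ∂(P.withDensity fun ω => ENNReal.ofReal (W ω)).map X
      = ∫ ω in X ⁻¹' A, W ω * f (X ω) ∂P := by
  rw [setIntegral_map hA hf.aestronglyMeasurable hX.aemeasurable, restrict_withDensity (hX hA),
    integral_withDensity_eq_integral_toReal_smul hW.ennreal_ofReal
      (ae_of_all _ fun _ => ENNReal.ofReal_lt_top)]
  simp only [ENNReal.toReal_ofReal (hW0 _), smul_eq_mul]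

end

lemma setIntegral_mul_one_sub_eq_of_ae_eq_condExp {Ω : Type*} {m m₀ : MeasurableSpace Ω}
    {P : Measure Ω} [IsFiniteMeasure P] (hm : m ≤ m₀) {X Z : Ω → ℝ} (hZ : Measurable Z)
    (hZ01 : ∀ ω, Z ω ∈ Icc (0 : ℝ) 1) (hXZ : X =ᵐ[P] P[Z | m]) {S : Set Ω}
    (hS : MeasurableSet[m] S) :
    ∫ ω in S, Z ω * (1 - X ω) ∂P = ∫ ω in S, (1 - Z ω) * X ω ∂P := by
  have hZ_bdd : ∀ᵐ ω ∂P, ‖Z ω‖ ≤ 1 :=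
    ae_of_all _ fun ω => by rw [Real.norm_of_nonneg (hZ01 ω).1]; exact (hZ01 ω).2
  have hZ_int : Integrable Z P := Integrable.of_bound hZ.aestronglyMeasurable 1 hZ_bdd
  have hX_int : Integrable X P := integrable_condExp.congr hXZ.symm
  have hZX_int : Integrable (fun ω => Z ω * X ω) P :=
    hX_int.bdd_mul hZ.aestronglyMeasurable hZ_bdd
  have hX_eq_Z : ∫ ω in S, X ω ∂P = ∫ ω in S, Z ω ∂P := by
    rw [setIntegral_congr_ae (hm S hS) (hXZ.mono fun ω h _ => h), setIntegral_condExp hm hZ_int hS]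
  calc ∫ ω in S, Z ω * (1 - X ω) ∂P = ∫ ω in S, Z ω - Z ω * X ω ∂P := by simp only [mul_one_sub]
    _ = ∫ ω in S, X ω - Z ω * X ω ∂P := by
      rw [integral_sub hZ_int.restrict hZX_int.restrict,
        integral_sub hX_int.restrict hZX_int.restrict, hX_eq_Z]
    _ = ∫ ω in S, (1 - Z ω) * X ω ∂P := by simp only [one_sub_mul]

theorem stmt10_general
    (Ω : Type) (mΩ : MeasurableSpace Ω) (P : Measure Ω) [IsProbabilityMeasure P]
    (X Y Z : Ω → ℝ) (hX : Measurable X) (hY : Measurable Y) (hZ : Measurable Z)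
    (hZ01 : ∀ ω, Z ω ∈ Set.Icc (0 : ℝ) 1)
    (hXZ : X =ᵐ[P] P[Z | MeasurableSpace.comap X (borel ℝ)])
    (m μ ν : Measure (ℝ × ℝ))
    (hm : m = Measure.map (fun ω => (X ω, Y ω)) P)
    (hμ : μ = Measure.map (fun ω => (X ω, Y ω))
            (P.withDensity (fun ω => ENNReal.ofReal (Z ω))))
    (hν : ν = Measure.map (fun ω => (X ω, Y ω))
            (P.withDensity (fun ω => ENNReal.ofReal (1 - Z ω)))) :
    m = μ + ν ∧
    ∀ A : Set ℝ, MeasurableSet A →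
      ∫ x in A, (1 - x) ∂(μ.map Prod.fst) = ∫ x in A, x ∂(ν.map Prod.fst) := by
  have hXY : Measurable fun ω => (X ω, Y ω) := hX.prodMk hY
  refine ⟨?_, fun A hA => ?_⟩
  · rw [hm, hμ, hν, ← Measure.map_add _ _ hXY,
      withDensity_ofReal_add_withDensity_ofReal_one_sub hZ hZ01]
  · have hfst (ρ : Measure Ω) : (ρ.map fun ω => (X ω, Y ω)).map Prod.fst = ρ.map X :=
      Measure.map_map measurable_fst hXY
    rw [hμ, hν, hfst, hfst,
      setIntegral_map_withDensity_ofReal (f := fun x => 1 - x) hX hZ (fun ω => (hZ01 ω).1)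
        (measurable_const.sub measurable_id) hA,
      setIntegral_map_withDensity_ofReal (W := fun ω => 1 - Z ω) (f := fun x => x) hX
        (measurable_const.sub hZ) (fun ω => sub_nonneg.2 (hZ01 ω).2) measurable_id hA]
    exact setIntegral_mul_one_sub_eq_of_ae_eq_condExp hX.comap_le hZ hZ01 hXZ ⟨A, hA, rfl⟩

theorem stmt10
    (Ω : Type) (mΩ : MeasurableSpace Ω) (P : Measure Ω) [IsProbabilityMeasure P]
    (X Y Z : Ω → ℝ) (hX : Measurable X) (hY : Measurable Y) (hZ : Measurable Z)
    (hZ01 : ∀ ω, Z ω ∈ Set.Icc (0 : ℝ) 1)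
    (hXZ : X =ᵐ[P] P[Z | MeasurableSpace.comap X (borel ℝ)])
    (hYZ : Y =ᵐ[P] P[Z | MeasurableSpace.comap Y (borel ℝ)])
    (m μ ν : Measure (ℝ × ℝ))
    (hm : m = Measure.map (fun ω => (X ω, Y ω)) P)
    (hμ : μ = Measure.map (fun ω => (X ω, Y ω))
            (P.withDensity (fun ω => ENNReal.ofReal (Z ω))))
    (hν : ν = Measure.map (fun ω => (X ω, Y ω))
            (P.withDensity (fun ω => ENNReal.ofReal (1 - Z ω)))) :
    m = μ + ν ∧
    ∀ A : Set ℝ, MeasurableSet A →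
      ∫ x in A, (1 - x) ∂(μ.map Prod.fst) = ∫ x in A, x ∂(ν.map Prod.fst) :=
  stmt10_general Ω mΩ P X Y Z hX hY hZ hZ01 hXZ m μ ν hm hμ hν
end

section
/- Let m be a coherent probability measure whose representation is unique and minimal. Then m is an extreme point of the convex set C of coherent distributions: if m = β·m₁ + (1−β)·m₂ with m₁, m₂ ∈ C and β ∈ (0,1), then m₁ = m₂ = m. -/
open MeasureTheory Set

open scoped ENNReal NNReal

/-!
If `m₁` is the law of `(X, Y)` with `X = 𝔼[Z | X]`, `Y = 𝔼[Z | Y]`, weighting that law by `Z` and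
by `1 - Z` gives a representation of `m₁`. Mixing representations of `m₁` and `m₂` with weights
`β` and `1 - β` gives a representation of `m`, which by uniqueness is `(μ, ν)`. So `β` times the
representation of `m₁` lies below `(μ, ν)`, hence by minimality is a multiple `c • (μ, ν)`;
comparing total masses gives `c = β`, so `m₁ = m`, and likewise `m₂ = m`.
-/

section CoherentTriple

variable {Ω : Type*} [MeasurableSpace Ω] {P : Measure Ω} {X Z : Ω → ℝ}

lemma ae_mem_Icc_of_ae_eq_condExp {m : MeasurableSpace Ω} (hZ01 : ∀ ω, Z ω ∈ Icc (0 : ℝ) 1)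
    (hX : X =ᵐ[P] P[Z | m]) : ∀ᵐ ω ∂P, X ω ∈ Icc (0 : ℝ) 1 := by
  filter_upwards [condExp_nonneg (ae_of_all P fun ω ↦ (hZ01 ω).1),
    condExp_le_nonneg_const zero_le_one (ae_of_all P fun ω ↦ (hZ01 ω).2), hX] with ω h0 h1 hω
  exact hω ▸ ⟨h0, h1⟩

/-- Both sides equal `∫_{X⁻¹ A} Z - ∫_{X⁻¹ A} Z X`, because `∫_{X⁻¹ A} X = ∫_{X⁻¹ A} Z`. -/
lemma setIntegral_one_sub_map_withDensity_eq [IsFiniteMeasure P] (hX : Measurable X)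
    (hZ : Measurable Z) (hZ01 : ∀ ω, Z ω ∈ Icc (0 : ℝ) 1)
    (hXc : X =ᵐ[P] P[Z | MeasurableSpace.comap X (borel ℝ)])
    {A : Set ℝ} (hA : MeasurableSet A) :
    ∫ x in A, (1 - x) ∂(P.withDensity fun ω ↦ (Z ω).toNNReal).map X =
      ∫ x in A, x ∂(P.withDensity fun ω ↦ (1 - Z ω).toNNReal).map X := by
  have hZint : Integrable Z P := .of_mem_Icc 0 1 hZ.aemeasurable (ae_of_all P hZ01)
  have hXint : Integrable X P := integrable_condExp.congr hXc.symm
  have hZXint : Integrable (fun ω ↦ Z ω * X ω) P :=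
    hXint.bdd_mul hZ.aestronglyMeasurable
      (ae_of_all _ fun ω ↦ by simpa [abs_of_nonneg (hZ01 ω).1] using (hZ01 ω).2)
  have hXA : ∫ ω in X ⁻¹' A, X ω ∂P = ∫ ω in X ⁻¹' A, Z ω ∂P := by
    rw [setIntegral_congr_ae (hX hA) (hXc.mono fun ω h _ ↦ h)]
    exact setIntegral_condExp hX.comap_le hZint ⟨A, hA, rfl⟩
  rw [setIntegral_map hA (by fun_prop) hX.aemeasurable,
    setIntegral_map (f := fun x ↦ x) hA aestronglyMeasurable_id hX.aemeasurable,
    setIntegral_withDensity_eq_setIntegral_smul hZ.real_toNNReal _ (hX hA),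
    setIntegral_withDensity_eq_setIntegral_smul (hZ.const_sub 1).real_toNNReal _ (hX hA)]
  have e1 : ∀ ω, (Z ω).toNNReal • (1 - X ω) = Z ω - Z ω * X ω := fun ω ↦ by
    rw [NNReal.smul_def, Real.coe_toNNReal _ (hZ01 ω).1, smul_eq_mul]; ring
  have e2 : ∀ ω, (1 - Z ω).toNNReal • X ω = X ω - Z ω * X ω := fun ω ↦ by
    rw [NNReal.smul_def, Real.coe_toNNReal _ (sub_nonneg.2 (hZ01 ω).2), smul_eq_mul]; ring
  simp only [e1, e2]
  rw [integral_sub hZint.integrableOn hZXint.integrableOn,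
    integral_sub hXint.integrableOn hZXint.integrableOn, hXA]

end CoherentTriple

lemma IsCoherent.ae_mem_unitSquare {m : Measure (ℝ × ℝ)} (h : IsCoherent m) :
    ∀ᵐ p ∂m, p ∈ Icc (0 : ℝ) 1 ×ˢ Icc (0 : ℝ) 1 := by
  obtain ⟨Ω, _, P, _, X, Y, Z, hX, hY, hZ, hZ01, rfl, hXc, hYc⟩ := h
  refine (ae_map_iff (hX.prodMk hY).aemeasurable (measurableSet_Icc.prod measurableSet_Icc)).2 ?_
  filter_upwards [ae_mem_Icc_of_ae_eq_condExp hZ01 hXc,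
    ae_mem_Icc_of_ae_eq_condExp hZ01 hYc] with ω hXω hYω using ⟨hXω, hYω⟩

lemma IsCoherent.exists_memR_add_eq {m : Measure (ℝ × ℝ)} (h : IsCoherent m) :
    ∃ μ ν, MemR μ ν ∧ μ + ν = m := by
  obtain ⟨Ω, _, P, _, X, Y, Z, hX, hY, hZ, hZ01, rfl, hXc, hYc⟩ := h
  have hXY : Measurable fun ω ↦ (X ω, Y ω) := hX.prodMk hY
  refine ⟨(P.withDensity fun ω ↦ (Z ω).toNNReal).map fun ω ↦ (X ω, Y ω),
    (P.withDensity fun ω ↦ (1 - Z ω).toNNReal).map fun ω ↦ (X ω, Y ω), fun A hA ↦ ?_, ?_⟩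
  · simp only [Measure.map_map measurable_fst hXY, Measure.map_map measurable_snd hXY]
    exact ⟨setIntegral_one_sub_map_withDensity_eq hX hZ hZ01 hXc hA,
      setIntegral_one_sub_map_withDensity_eq hY hZ hZ01 hYc hA⟩
  · have hsum : ∀ ω, ((Z ω).toNNReal : ℝ≥0∞) + (1 - Z ω).toNNReal = 1 := fun ω ↦ by
      rw [← ENNReal.coe_add, ← Real.toNNReal_add (hZ01 ω).1 (sub_nonneg.2 (hZ01 ω).2)]
      simp
    rw [← Measure.map_add _ _ hXY, ← withDensity_add_left hZ.real_toNNReal.coe_nnreal_ennreal]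
    simp only [Pi.add_def, hsum, Pi.one_def.symm, withDensity_one]

lemma integrable_map_of_le_of_ae_mem {m ρ : Measure (ℝ × ℝ)} [IsFiniteMeasure m] (hρ : ρ ≤ m)
    {π : ℝ × ℝ → ℝ} (hπ : Measurable π) {K : Set ℝ} (hK : IsCompact K) (hKm : MeasurableSet K)
    (hm : ∀ᵐ p ∂m, π p ∈ K) {f : ℝ → ℝ} (hf : Continuous f) : Integrable f (ρ.map π) := by
  have : IsFiniteMeasure ρ := isFiniteMeasure_of_le m hρ
  have hρK : ∀ᵐ x ∂ρ.map π, x ∈ K :=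
    (ae_map_iff hπ.aemeasurable hKm).2 ((Measure.absolutelyContinuous_of_le hρ).ae_le hm)
  rw [← Measure.restrict_eq_self_of_ae_mem hρK]
  exact hf.continuousOn.integrableOn_compact hK

lemma setIntegral_map_add_measure {m μ₁ μ₂ : Measure (ℝ × ℝ)} [IsFiniteMeasure m]
    (hle : μ₁ + μ₂ ≤ m) {π : ℝ × ℝ → ℝ} (hπ : Measurable π) (hm : ∀ᵐ p ∂m, π p ∈ Icc (0 : ℝ) 1)
    {f : ℝ → ℝ} (hf : Continuous f) (A : Set ℝ) :
    ∫ x in A, f x ∂(μ₁ + μ₂).map π = ∫ x in A, f x ∂μ₁.map π + ∫ x in A, f x ∂μ₂.map π := by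
  have hint : ∀ ρ, ρ ≤ m → IntegrableOn f A (ρ.map π) := fun ρ hρ ↦
    (integrable_map_of_le_of_ae_mem hρ hπ isCompact_Icc measurableSet_Icc hm hf).integrableOn
  rw [Measure.map_add _ _ hπ, Measure.restrict_add,
    integral_add_measure (hint μ₁ ((Measure.le_add_right le_rfl).trans hle))
      (hint μ₂ ((Measure.le_add_left le_rfl).trans hle))]

namespace MemR

variable {μ ν μ₁ ν₁ μ₂ ν₂ : Measure (ℝ × ℝ)}

lemma smul (h : MemR μ ν) (c : ℝ≥0∞) : MemR (c • μ) (c • ν) := fun A hA ↦ by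
  obtain ⟨hx, hy⟩ := h A hA
  simp only [Measure.map_smul, Measure.restrict_smul, integral_smul_measure, hx, hy, and_self]

/-- The support hypothesis makes the integrals in `MemR` genuine (not junk) Bochner integrals,
so that they split over sums of measures. -/
lemma add (h₁ : MemR μ₁ ν₁) (h₂ : MemR μ₂ ν₂) {m : Measure (ℝ × ℝ)} [IsFiniteMeasure m]
    (hm : ∀ᵐ p ∂m, p ∈ Icc (0 : ℝ) 1 ×ˢ Icc (0 : ℝ) 1) (hle : μ₁ + μ₂ + (ν₁ + ν₂) ≤ m) :
    MemR (μ₁ + μ₂) (ν₁ + ν₂) := fun A hA ↦ by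
  obtain ⟨h₁x, h₁y⟩ := h₁ A hA
  obtain ⟨h₂x, h₂y⟩ := h₂ A hA
  have hμ : μ₁ + μ₂ ≤ m := (Measure.le_add_right le_rfl).trans hle
  have hν : ν₁ + ν₂ ≤ m := (Measure.le_add_left le_rfl).trans hle
  have hx : ∀ᵐ p ∂m, p.1 ∈ Icc (0 : ℝ) 1 := hm.mono fun p hp ↦ hp.1
  have hy : ∀ᵐ p ∂m, p.2 ∈ Icc (0 : ℝ) 1 := hm.mono fun p hp ↦ hp.2
  constructor
  · rw [setIntegral_map_add_measure hμ measurable_fst hx (by fun_prop),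
      setIntegral_map_add_measure hν measurable_fst hx continuous_id', h₁x, h₂x]
  · rw [setIntegral_map_add_measure hμ measurable_snd hy (by fun_prop),
      setIntegral_map_add_measure hν measurable_snd hy continuous_id', h₁y, h₂y]

end MemR

def IsMinimalRep (μ ν : Measure (ℝ × ℝ)) : Prop :=
  ∀ μ' ν' : Measure (ℝ × ℝ), MemR μ' ν' → μ' ≤ μ → ν' ≤ ν →
    ∃ c : ℝ≥0, c ≤ 1 ∧ μ' = (c : ℝ≥0∞) • μ ∧ ν' = (c : ℝ≥0∞) • ν

lemma IsMinimalRep.add_eq_of_smul_le {μ ν μ' ν' : Measure (ℝ × ℝ)} (hmin : IsMinimalRep μ ν)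
    [IsProbabilityMeasure (μ + ν)] [IsProbabilityMeasure (μ' + ν')] (hR : MemR μ' ν')
    {b : ℝ≥0} (hb : b ≠ 0) (hμ : (b : ℝ≥0∞) • μ' ≤ μ) (hν : (b : ℝ≥0∞) • ν' ≤ ν) :
    μ' + ν' = μ + ν := by
  obtain ⟨c, -, hcμ, hcν⟩ := hmin _ _ (hR.smul b) hμ hν
  have hsmul : (b : ℝ≥0∞) • (μ' + ν') = (c : ℝ≥0∞) • (μ + ν) := by
    rw [smul_add, smul_add, hcμ, hcν]
  have hbc : (b : ℝ≥0∞) = c := by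
    simpa only [Measure.smul_apply, measure_univ, smul_eq_mul, mul_one] using
      congrArg (fun ρ ↦ ρ univ) hsmul
  rw [← hbc] at hsmul
  have := congrArg ((b : ℝ≥0∞)⁻¹ • ·) hsmul
  rwa [smul_smul, smul_smul, ENNReal.inv_mul_cancel (by simpa) ENNReal.coe_ne_top, one_smul,
    one_smul] at this

theorem stmt12_general (m μ ν : Measure (ℝ × ℝ)) [IsProbabilityMeasure m]
    (hcoh : IsCoherent m)
    (hrep : m = μ + ν)
    (huniq : ∀ μ' ν' : Measure (ℝ × ℝ), MemR μ' ν' → m = μ' + ν' → μ' = μ ∧ ν' = ν)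
    (hmin : ∀ μ' ν' : Measure (ℝ × ℝ), MemR μ' ν' → μ' ≤ μ → ν' ≤ ν →
      ∃ c : NNReal, c ≤ 1 ∧ μ' = (c : ENNReal) • μ ∧ ν' = (c : ENNReal) • ν) :
    ∀ (β : NNReal), 0 < β → β < 1 →
      ∀ m₁ m₂ : Measure (ℝ × ℝ), IsProbabilityMeasure m₁ → IsProbabilityMeasure m₂ →
        IsCoherent m₁ → IsCoherent m₂ →
        m = (β : ENNReal) • m₁ + ((1 - β : NNReal) : ENNReal) • m₂ →
        m₁ = m ∧ m₂ = m := by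
  intro β hβ0 hβ1 m₁ m₂ hm₁ hm₂ hc₁ hc₂ hmix
  obtain ⟨μ₁, ν₁, hR₁, rfl⟩ := hc₁.exists_memR_add_eq
  obtain ⟨μ₂, ν₂, hR₂, rfl⟩ := hc₂.exists_memR_add_eq
  set γ : ℝ≥0 := 1 - β
  have hmix' : m = (β : ℝ≥0∞) • μ₁ + (γ : ℝ≥0∞) • μ₂ + ((β : ℝ≥0∞) • ν₁ + (γ : ℝ≥0∞) • ν₂) := by
    rw [hmix, smul_add, smul_add]
    abel
  have hR : MemR ((β : ℝ≥0∞) • μ₁ + (γ : ℝ≥0∞) • μ₂) ((β : ℝ≥0∞) • ν₁ + (γ : ℝ≥0∞) • ν₂) :=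
    (hR₁.smul β).add (hR₂.smul γ) hcoh.ae_mem_unitSquare hmix'.ge
  obtain ⟨hμ, hν⟩ := huniq _ _ hR hmix'
  subst hrep hμ hν
  exact ⟨IsMinimalRep.add_eq_of_smul_le hmin hR₁ hβ0.ne' (Measure.le_add_right le_rfl)
      (Measure.le_add_right le_rfl),
    IsMinimalRep.add_eq_of_smul_le hmin hR₂ (tsub_pos_of_lt hβ1).ne' (Measure.le_add_left le_rfl)
      (Measure.le_add_left le_rfl)⟩

theorem stmt12 (m μ ν : Measure (ℝ × ℝ)) [IsProbabilityMeasure m]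
    (hcoh : IsCoherent m)
    (hrep : m = μ + ν) (hR : MemR μ ν)
    (huniq : ∀ μ' ν' : Measure (ℝ × ℝ), MemR μ' ν' → m = μ' + ν' → μ' = μ ∧ ν' = ν)
    (hmin : ∀ μ' ν' : Measure (ℝ × ℝ), MemR μ' ν' → μ' ≤ μ → ν' ≤ ν →
      ∃ c : NNReal, c ≤ 1 ∧ μ' = (c : ENNReal) • μ ∧ ν' = (c : ENNReal) • ν) :
    ∀ (β : NNReal), 0 < β → β < 1 →
      ∀ m₁ m₂ : Measure (ℝ × ℝ), IsProbabilityMeasure m₁ → IsProbabilityMeasure m₂ →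
        IsCoherent m₁ → IsCoherent m₂ →
        m = (β : ENNReal) • m₁ + ((1 - β : NNReal) : ENNReal) • m₂ →
        m₁ = m ∧ m₂ = m :=
  stmt12_general m μ ν hcoh hrep huniq hmin
end

section
/- Let η be a finitely supported extreme point of the set C of coherent distributions, with unique representation (μ,ν). Then supp(η) contains no alternating cycle: there is no axial cycle (x₁,y₁),…,(x_{2n},y_{2n}) in supp(η) with all odd-indexed points in supp(μ) and all even-indexed points in supp(ν). -/
open MeasureTheory Set

open scoped ENNReal

/-!
Pick `ε > 0` below the `μ`-mass of every `μ`-point and the `ν`-mass of every `ν`-point of the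
cycle, and move mass `ε` in `μ` from the `μ`-points to the `ν`-points, and in `ν` the other way
round. This keeps `μ + ν`, and since consecutive points of an axial cycle share a coordinate, it
keeps both one-dimensional marginals of `μ` and of `ν`. Membership in `R` only depends on these
marginals, so the new pair is a second representation of `η`.
-/

theorem Finset.sum_range_succ_shift {M : Type*} [AddCommMonoid M] {n : ℕ} (f : ℕ → M)
    (h : f n = f 0) : ∑ j ∈ range n, f (j + 1) = ∑ j ∈ range n, f j := by
  cases n with
  | zero => simp
  | succ m => rw [sum_range_succ, h, ← sum_range_succ']

namespace MeasureTheory.Measure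

variable {X : Type*} [MeasurableSpace X]

theorem smul_sum_dirac_le [MeasurableSingletonClass X] {ι : Type*} {m : Measure X}
    {s : Finset ι} {q : ι → X} {ε : ℝ≥0∞} (hq : InjOn q s) (hε : ∀ i ∈ s, ε ≤ m {q i}) :
    ε • ∑ i ∈ s, dirac (q i) ≤ m := by
  have hdisj : (s : Set ι).PairwiseDisjoint fun i => ({q i} : Set X) :=
    fun i hi j hj hij => disjoint_singleton.mpr (hq.ne hi hj hij)
  calc ε • ∑ i ∈ s, dirac (q i) = ∑ i ∈ s, ε • dirac (q i) := Finset.smul_sum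
    _ ≤ ∑ i ∈ s, m.restrict {q i} := Finset.sum_le_sum fun i hi => by
        rw [restrict_singleton]
        gcongr
        exact hε i hi
    _ = m.restrict (⋃ i ∈ s, {q i}) := by
        rw [restrict_biUnion_finset hdisj fun _ => measurableSet_singleton _]
        exact (sum_coe_finset s fun i => m.restrict {q i}).symm
    _ ≤ m := restrict_le_self

theorem sub_add_add_sub_add {μ ν α β : Measure X} [IsFiniteMeasure μ] [IsFiniteMeasure ν]
    (hα : α ≤ μ) (hβ : β ≤ ν) : (μ - α + β) + (ν - β + α) = μ + ν := by
  have := isFiniteMeasure_of_le μ hα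
  have := isFiniteMeasure_of_le ν hβ
  conv_rhs => rw [← sub_add_cancel_of_le hα, ← sub_add_cancel_of_le hβ]
  ac_rfl

theorem map_sub_add_eq_map {Y : Type*} [MeasurableSpace Y] {μ α β : Measure X}
    [IsFiniteMeasure μ] {c : X → Y} (hc : Measurable c) (hα : α ≤ μ) (h : α.map c = β.map c) :
    (μ - α + β).map c = μ.map c := by
  have := isFiniteMeasure_of_le μ hα
  conv_rhs => rw [← sub_add_cancel_of_le hα]
  rw [Measure.map_add _ _ hc, Measure.map_add _ _ hc, h]

theorem eq_of_sub_add_eq {μ α β : Measure X} [IsFiniteMeasure μ] (hα : α ≤ μ)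
    (h : μ - α + β = μ) : β = α := by
  have := isFiniteMeasure_of_le μ hα
  ext s -
  have hs := congrArg (· s) (h.trans (sub_add_cancel_of_le hα).symm)
  simp only [add_apply] at hs
  exact (ENNReal.add_right_inj (ne_top_of_le_ne_top (measure_ne_top μ s) (sub_le s))).mp hs

end MeasureTheory.Measure

theorem MemR.of_map_eq {μ ν μ' ν' : Measure (ℝ × ℝ)} (h : MemR μ ν)
    (hμ₁ : μ'.map Prod.fst = μ.map Prod.fst) (hμ₂ : μ'.map Prod.snd = μ.map Prod.snd)
    (hν₁ : ν'.map Prod.fst = ν.map Prod.fst) (hν₂ : ν'.map Prod.snd = ν.map Prod.snd) :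
    MemR μ' ν' := by
  intro A hA
  rw [hμ₁, hμ₂, hν₁, hν₂]
  exact h A hA

theorem MemR.sub_add {μ ν α β : Measure (ℝ × ℝ)} [IsFiniteMeasure μ] [IsFiniteMeasure ν]
    (h : MemR μ ν) (hα : α ≤ μ) (hβ : β ≤ ν)
    (h₁ : α.map Prod.fst = β.map Prod.fst) (h₂ : α.map Prod.snd = β.map Prod.snd) :
    MemR (μ - α + β) (ν - β + α) :=
  h.of_map_eq (Measure.map_sub_add_eq_map measurable_fst hα h₁)
    (Measure.map_sub_add_eq_map measurable_snd hα h₂)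
    (Measure.map_sub_add_eq_map measurable_fst hβ h₁.symm)
    (Measure.map_sub_add_eq_map measurable_snd hβ h₂.symm)

theorem injOn_two_mul {α : Type*} {n : ℕ} {p : ℕ → α} (hinj : InjOn p (Iio (2 * n))) :
    InjOn (fun j => p (2 * j)) (Finset.range n) := fun i hi j hj h => by
  simp only [Finset.coe_range, mem_Iio] at hi hj
  have := hinj (mem_Iio.mpr (by omega)) (mem_Iio.mpr (by omega)) h
  omega

theorem injOn_two_mul_add_one {α : Type*} {n : ℕ} {p : ℕ → α} (hinj : InjOn p (Iio (2 * n))) :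
    InjOn (fun j => p (2 * j + 1)) (Finset.range n) := fun i hi j hj h => by
  simp only [Finset.coe_range, mem_Iio] at hi hj
  have := hinj (mem_Iio.mpr (by omega)) (mem_Iio.mpr (by omega)) h
  omega

section AxialCycle

variable {X Y : Type*} [MeasurableSpace X] [MeasurableSpace Y] [MeasurableSingletonClass X]
  [MeasurableSingletonClass Y] {n : ℕ} {p : ℕ → X × Y}

theorem map_fst_sum_dirac_even_eq_odd (hcyc : p (2 * n) = p 0)
    (hx : ∀ j < n, (p (2 * j + 1)).1 = (p (2 * j + 2)).1) :
    (∑ j ∈ Finset.range n, Measure.dirac (p (2 * j))).map Prod.fst =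
      (∑ j ∈ Finset.range n, Measure.dirac (p (2 * j + 1))).map Prod.fst := by
  simp only [Measure.map_finset_sum measurable_fst.aemeasurable, Measure.map_dirac]
  calc ∑ j ∈ Finset.range n, Measure.dirac (p (2 * j)).1
      = ∑ j ∈ Finset.range n, Measure.dirac (p (2 * (j + 1))).1 :=
        (Finset.sum_range_succ_shift (fun j => Measure.dirac (p (2 * j)).1) (by simp [hcyc])).symm
    _ = ∑ j ∈ Finset.range n, Measure.dirac (p (2 * j + 1)).1 :=
        Finset.sum_congr rfl fun j hj => by rw [hx j (Finset.mem_range.mp hj)]; rfl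

theorem map_snd_sum_dirac_even_eq_odd (hy : ∀ j < n, (p (2 * j)).2 = (p (2 * j + 1)).2) :
    (∑ j ∈ Finset.range n, Measure.dirac (p (2 * j))).map Prod.snd =
      (∑ j ∈ Finset.range n, Measure.dirac (p (2 * j + 1))).map Prod.snd := by
  simp only [Measure.map_finset_sum measurable_snd.aemeasurable, Measure.map_dirac]
  exact Finset.sum_congr rfl fun j hj => by rw [hy j (Finset.mem_range.mp hj)]

theorem sum_dirac_even_apply_one (hinj : InjOn p (Iio (2 * n))) :
    (∑ j ∈ Finset.range n, Measure.dirac (p (2 * j))) {p 1} = 0 := by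
  rw [Measure.finsetSum_apply]
  refine Finset.sum_eq_zero fun j hj => ?_
  have hj := Finset.mem_range.mp hj
  rw [Measure.dirac_apply, indicator_of_notMem]
  exact fun h => by have := hinj (mem_Iio.mpr (by omega)) (mem_Iio.mpr (by omega)) h; omega

theorem one_le_sum_dirac_odd_apply_one (hn : 1 ≤ n) :
    1 ≤ (∑ j ∈ Finset.range n, Measure.dirac (p (2 * j + 1))) {p 1} := by
  rw [Measure.finsetSum_apply]
  calc (1 : ℝ≥0∞) = Measure.dirac (p (2 * 0 + 1)) {p 1} := by simp
    _ ≤ _ := Finset.single_le_sum (f := fun j => Measure.dirac (p (2 * j + 1)) {p 1})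
      (fun _ _ => zero_le) (Finset.mem_range.mpr hn)

theorem smul_sum_dirac_odd_ne_even (hn : 1 ≤ n) (hinj : InjOn p (Iio (2 * n)))
    {ε : ℝ≥0∞} (hε : ε ≠ 0) :
    ε • ∑ j ∈ Finset.range n, Measure.dirac (p (2 * j + 1)) ≠
      ε • ∑ j ∈ Finset.range n, Measure.dirac (p (2 * j)) := fun h => by
  have h1 := congrArg (· {p 1}) h
  simp only [Measure.smul_apply, smul_eq_mul, sum_dirac_even_apply_one hinj, mul_zero,
    mul_eq_zero] at h1
  exact h1.elim hε (one_pos.trans_le (one_le_sum_dirac_odd_apply_one hn)).ne'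

end AxialCycle

theorem stmt17_general (η μ ν : Measure (ℝ × ℝ)) [IsProbabilityMeasure η]
    (hrep : η = μ + ν) (hR : MemR μ ν)
    (huniq : ∀ μ' ν' : Measure (ℝ × ℝ), MemR μ' ν' → η = μ' + ν' → μ' = μ ∧ ν' = ν) :
    ¬ ∃ (n : ℕ), 1 ≤ n ∧ ∃ p : ℕ → ℝ × ℝ,
        Set.InjOn p (Set.Iio (2 * n)) ∧
        p (2 * n) = p 0 ∧
        (∀ j < n, (p (2 * j)).2 = (p (2 * j + 1)).2) ∧
        (∀ j < n, (p (2 * j + 1)).1 = (p (2 * j + 2)).1) ∧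
        (∀ j < n, 0 < μ {p (2 * j)}) ∧
        (∀ j < n, 0 < ν {p (2 * j + 1)}) := by
  rintro ⟨n, hn, p, hinj, hcyc, hy, hx, hμpos, hνpos⟩
  have := isFiniteMeasure_of_le η (hrep ▸ Measure.le_add_right le_rfl : μ ≤ η)
  have := isFiniteMeasure_of_le η (hrep ▸ Measure.le_add_left le_rfl : ν ≤ η)
  set ε := (Finset.range n).inf fun j => min (μ {p (2 * j)}) (ν {p (2 * j + 1)})
  have hε : 0 < ε := (Finset.lt_inf_iff bot_lt_top).mpr fun j hj =>
    lt_min (hμpos j (Finset.mem_range.mp hj)) (hνpos j (Finset.mem_range.mp hj))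
  set α := ε • ∑ j ∈ Finset.range n, Measure.dirac (p (2 * j))
  set β := ε • ∑ j ∈ Finset.range n, Measure.dirac (p (2 * j + 1))
  have hα : α ≤ μ := Measure.smul_sum_dirac_le (injOn_two_mul hinj)
    fun j hj => (Finset.inf_le hj).trans (min_le_left _ _)
  have hβ : β ≤ ν := Measure.smul_sum_dirac_le (injOn_two_mul_add_one hinj)
    fun j hj => (Finset.inf_le hj).trans (min_le_right _ _)
  have h₁ : α.map Prod.fst = β.map Prod.fst := by
    simp only [α, β, Measure.map_smul, map_fst_sum_dirac_even_eq_odd hcyc hx]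
  have h₂ : α.map Prod.snd = β.map Prod.snd := by
    simp only [α, β, Measure.map_smul, map_snd_sum_dirac_even_eq_odd hy]
  obtain ⟨hμ', -⟩ := huniq _ _ (hR.sub_add hα hβ h₁ h₂)
    (hrep.trans (Measure.sub_add_add_sub_add hα hβ).symm)
  exact smul_sum_dirac_odd_ne_even hn hinj hε.ne' (Measure.eq_of_sub_add_eq hα hμ')

theorem stmt17 (η μ ν : Measure (ℝ × ℝ)) [IsProbabilityMeasure η]
    (hcoh : IsCoherent η)
    (hext : ∀ (β : NNReal), 0 < β → β < 1 →
      ∀ m₁ m₂ : Measure (ℝ × ℝ), IsProbabilityMeasure m₁ → IsProbabilityMeasure m₂ →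
        IsCoherent m₁ → IsCoherent m₂ →
        η = (β : ENNReal) • m₁ + ((1 - β : NNReal) : ENNReal) • m₂ →
        m₁ = η ∧ m₂ = η)
    (S : Finset (ℝ × ℝ)) (hS : η (↑S)ᶜ = 0) (hSpos : ∀ p ∈ S, 0 < η {p})
    (hrep : η = μ + ν) (hR : MemR μ ν)
    (huniq : ∀ μ' ν' : Measure (ℝ × ℝ), MemR μ' ν' → η = μ' + ν' → μ' = μ ∧ ν' = ν) :
    ¬ ∃ (n : ℕ), 1 ≤ n ∧ ∃ p : ℕ → ℝ × ℝ,
        Set.InjOn p (Set.Iio (2 * n)) ∧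
        p (2 * n) = p 0 ∧
        (∀ j < n, (p (2 * j)).2 = (p (2 * j + 1)).2) ∧
        (∀ j < n, (p (2 * j + 1)).1 = (p (2 * j + 2)).1) ∧
        (∀ j < n, 0 < μ {p (2 * j)}) ∧
        (∀ j < n, 0 < ν {p (2 * j + 1)}) :=
  stmt17_general η μ ν hrep hR huniq
end
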